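/- Let (Δ_n)_{n∈ℕ} be a sequence of symmetric matrices Δ_n ∈ ℝ^{n×n} with GWMs A_n = n·Δ_n, and let W be a graphon such that ‖T_{W_{A_n}} − T_W‖_{L²[0,1]→L²[0,1]} → 0. Let h : ℝ → ℝ be continuous, and let (x_n)_n be signals x_n ∈ ℂⁿ and ψ ∈ L²[0,1] with ‖ψ_{x_n} − ψ‖_{L²[0,1]} → 0. Then for every ε > 0 there exists N such that for all n, m ≥ N, ‖ψ_{h(Δ_n)x_n} − ψ_{h(Δ_m)x_m}‖_{L²[0,1]} < ε. -/

import Mathlib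

open MeasureTheory Filter

noncomputable section

/-- Lebesgue measure restricted to `[0,1]`. -/
abbrev μ01 : Measure ℝ := volume.restrict (Set.Icc 0 1)

instance : IsFiniteMeasure μ01 := by
  constructor
  rw [Measure.restrict_apply_univ, Real.volume_Icc]
  exact ENNReal.ofReal_lt_top

/-- The space `L²[0,1]` (complex valued). -/
abbrev L2 := Lp ℂ 2 μ01

/-- The `j`-th interval `P_j = [j/n, (j+1)/n)` of the standard partition of `[0,1]`
(0-indexed version of `[(j-1)/n, j/n)`). -/
def part (n : ℕ) (j : Fin n) : Set ℝ := Set.Ico ((j : ℝ) / n) (((j : ℝ) + 1) / n)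

lemma part_meas (n : ℕ) (j : Fin n) : MeasurableSet (part n j) := measurableSet_Ico

lemma part_ne_top (n : ℕ) (j : Fin n) : μ01 (part n j) ≠ ⊤ := (measure_lt_top _ _).ne

/-- The graphon `W_B` induced by an `n × n` matrix `B`:
`W_B(u,v) = ∑_{i,j} B i j · 1_{P_i}(u) · 1_{P_j}(v)`. -/
def inducedGraphon {n : ℕ} (B : Matrix (Fin n) (Fin n) ℝ) : ℝ → ℝ → ℝ :=
  fun u v => ∑ i, ∑ j, B i j * (part n i).indicator 1 u * (part n j).indicator 1 v

/-- The graphon signal `ψ_x = ∑_j x_j · 1_{P_j} ∈ L²[0,1]` induced by `x ∈ ℂⁿ`. -/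
def inducedSignal {n : ℕ} (x : Fin n → ℂ) : L2 :=
  ∑ j, indicatorConstLp 2 (part_meas n j) (part_ne_top n j) (x j)

/-- `W` is a graphon: bounded, symmetric and measurable `[0,1]² → ℝ`
(realized as a function on all of `ℝ²`; only its values matter w.r.t. `μ01`). -/
structure IsGraphon (W : ℝ → ℝ → ℝ) : Prop where
  symm : ∀ u v, W u v = W v u
  meas : Measurable (Function.uncurry W)
  bdd : ∃ C, ∀ u v, |W u v| ≤ C

/-- `T` is the graphon shift operator of `W`: `(T f)(v) = ∫₀¹ W(v,u) f(u) du`. -/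
def IsGRSO (W : ℝ → ℝ → ℝ) (T : L2 →L[ℂ] L2) : Prop :=
  ∀ f : L2, ∀ᵐ v ∂μ01, T f v = ∫ u, (W v u : ℂ) * f u ∂μ01

/-- Entrywise complexification of a real activation function. -/
def rhoC (ρ : ℝ → ℝ) (z : ℂ) : ℂ := (ρ z.re : ℂ) + (ρ z.im : ℂ) * Complex.I

/-- The realization of an SCNN (filters `filt`, weights `wt`, activation `ρ`) on a graph with
GSO `Δ`: `graphNet F filt wt ρ Δ x l j` is the `j`-th feature of the `l`-th layer, on input
feature map `x`.  Layer `l+1` is obtained from layer `l` via the filters `filt l j k`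
and weights `wt l j k`. -/
def graphNet (F : ℕ → ℕ) (filt : ℕ → ℕ → ℕ → ℝ → ℝ) (wt : ℕ → ℕ → ℕ → ℝ)
    (ρ : ℝ → ℝ) {n : ℕ} (Δ : Matrix (Fin n) (Fin n) ℝ) (x : ℕ → Fin n → ℂ) :
    ℕ → ℕ → Fin n → ℂ
  | 0, j => x j
  | (l + 1), j => fun v =>
      rhoC ρ (∑ k ∈ Finset.range (F l),
        (wt l j k : ℂ) * (((cfc (filt l j k) Δ).map Complex.ofReal).mulVec
          (graphNet F filt wt ρ Δ x l k)) v)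

/-- `y` is a realization of the SCNN (filters `filt`, weights `wt`, activation `ρ`,
`Lnum` layers, feature dimensions `F`) on the graphon shift operator `T`:
`y l j` is the `j`-th feature of the `l`-th layer, and each layer is obtained from the
previous one by filtering with `cfc (filt l j k) T`, taking weighted sums, and applying
the activation pointwise almost everywhere. -/
instance : ContinuousFunctionalCalculus ℝ (L2 →L[ℂ] L2) IsSelfAdjoint :=
  IsSelfAdjoint.instContinuousFunctionalCalculus

def IsGraphonNet (Lnum : ℕ) (F : ℕ → ℕ) (filt : ℕ → ℕ → ℕ → ℝ → ℝ) (wt : ℕ → ℕ → ℕ → ℝ)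
    (ρ : ℝ → ℝ) (T : L2 →L[ℂ] L2) (y : ℕ → ℕ → L2) : Prop :=
  ∀ l < Lnum, ∀ j < F (l + 1),
    ⇑(y (l + 1) j) =ᵐ[μ01]
      fun v => rhoC ρ
        (((∑ k ∈ Finset.range (F l),
          (wt l j k : ℂ) • (cfc (filt l j k) T) (y l k) : L2) : ℝ → ℂ) v)

/-!
Write `ι x = ψ_x` and `π f = (n ∫_{P_j} f)_j`, so that `π ∘ ι = id`. The graphon shift operator
of `W_{nΔ}` is `ι ∘ Δ ∘ π`, and `M ↦ ι ∘ M ∘ π` is a continuous non-unital `⋆`-homomorphism from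
real `n × n` matrices to operators on `L²[0,1]`; it therefore commutes with the non-unital
functional calculus. Splitting `h = (h - h 0) + h 0` gives `ψ_{h(Δ_n) x_n} = h(T_n) ψ_{x_n}`.
The continuous functional calculus is continuous in the self-adjoint operator, so
`h(T_n) ψ_{x_n} → h(T_W) ψ`, and a convergent sequence is Cauchy.
-/

open scoped InnerProductSpace Matrix Topology

lemma part_subset_Icc {n : ℕ} (j : Fin n) : part n j ⊆ Set.Icc 0 1 := by
  have hn : (0 : ℝ) < n := by exact_mod_cast j.pos
  have hj : (j : ℝ) + 1 ≤ n := by exact_mod_cast j.isLt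
  rintro t ⟨h0, h1⟩
  exact ⟨le_trans (by positivity) h0, h1.le.trans ((div_le_one hn).2 hj)⟩

lemma measureReal_part {n : ℕ} (j : Fin n) : μ01.real (part n j) = (n : ℝ)⁻¹ := by
  rw [measureReal_restrict_apply (part_meas n j),
    Set.inter_eq_self_of_subset_left (part_subset_Icc j), part,
    Real.volume_real_Ico_of_le (by gcongr; linarith)]
  ring

lemma disjoint_part {n : ℕ} {i j : Fin n} (hij : i ≠ j) : Disjoint (part n i) (part n j) := by
  have hn : (0 : ℝ) < n := by exact_mod_cast i.pos
  refine Set.disjoint_left.2 fun t ⟨hi, hi'⟩ ⟨hj, hj'⟩ => hij (Fin.ext ?_)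
  have h1 : (j : ℝ) < i + 1 := (div_lt_div_iff_of_pos_right hn).1 (hj.trans_lt hi')
  have h2 : (i : ℝ) < j + 1 := (div_lt_div_iff_of_pos_right hn).1 (hi.trans_lt hj')
  norm_cast at h1 h2
  omega

def partIndicator (n : ℕ) (j : Fin n) : L2 :=
  indicatorConstLp 2 (part_meas n j) (part_ne_top n j) 1

lemma indicatorConstLp_part {n : ℕ} (j : Fin n) (c : ℂ) :
    indicatorConstLp 2 (part_meas n j) (part_ne_top n j) c = c • partIndicator n j := by
  refine Lp.ext ?_
  filter_upwards [indicatorConstLp_coeFn (p := 2) (hs := part_meas n j)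
      (hμs := part_ne_top n j) (c := c), Lp.coeFn_smul c (partIndicator n j),
    indicatorConstLp_coeFn (p := 2) (hs := part_meas n j)
      (hμs := part_ne_top n j) (c := (1 : ℂ))] with v hc hsmul h1
  rw [hc, hsmul, Pi.smul_apply, partIndicator, h1]
  by_cases hv : v ∈ part n j <;> simp [hv]

lemma inducedSignal_eq_sum {n : ℕ} (x : Fin n → ℂ) :
    inducedSignal x = ∑ j, x j • partIndicator n j :=
  Finset.sum_congr rfl fun j _ => indicatorConstLp_part j (x j)

lemma inner_partIndicator {n : ℕ} (j : Fin n) (f : L2) :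
    ⟪partIndicator n j, f⟫_ℂ = ∫ v in part n j, f v ∂μ01 :=
  L2.inner_indicatorConstLp_one (part_meas n j) (part_ne_top n j) f

lemma inner_partIndicator_partIndicator {n : ℕ} (i j : Fin n) :
    ⟪partIndicator n i, partIndicator n j⟫_ℂ = if i = j then ((n : ℂ))⁻¹ else 0 := by
  have hj : ∫ v in part n i, partIndicator n j v ∂μ01
      = ∫ v in part n i, (part n j).indicator (fun _ => (1 : ℂ)) v ∂μ01 :=
    setIntegral_congr_ae (part_meas n i) <| by
      filter_upwards [indicatorConstLp_coeFn (p := 2) (hs := part_meas n j)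
        (hμs := part_ne_top n j) (c := (1 : ℂ))] with v hv _ using hv
  rw [inner_partIndicator, hj, setIntegral_indicator (part_meas n j), setIntegral_const]
  split_ifs with hij
  · subst hij
    rw [Set.inter_self, measureReal_part, Complex.real_smul, mul_one, Complex.ofReal_inv,
      Complex.ofReal_natCast]
  · simp [(disjoint_part hij).inter_eq]

lemma inner_partIndicator_inducedSignal {n : ℕ} (j : Fin n) (x : Fin n → ℂ) :
    ⟪partIndicator n j, inducedSignal x⟫_ℂ = (n : ℂ)⁻¹ * x j := by
  simp [inducedSignal_eq_sum, inner_sum, inner_smul_right, inner_partIndicator_partIndicator,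
    mul_comm]

section Operators

variable {n : ℕ}

variable (n) in
def inducedSignalCLM : (Fin n → ℂ) →L[ℂ] L2 :=
  ∑ j, (ContinuousLinearMap.proj j).smulRight (partIndicator n j)

lemma inducedSignalCLM_apply (x : Fin n → ℂ) : inducedSignalCLM n x = inducedSignal x := by
  simp [inducedSignalCLM, inducedSignal_eq_sum]

variable (n) in
def cellAverage : L2 →L[ℂ] (Fin n → ℂ) :=
  ContinuousLinearMap.pi fun j => (n : ℂ) • innerSL ℂ (partIndicator n j)

lemma cellAverage_apply (f : L2) (j : Fin n) :
    cellAverage n f j = n * ⟪partIndicator n j, f⟫_ℂ := rfl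

lemma cellAverage_inducedSignal (x : Fin n → ℂ) : cellAverage n (inducedSignal x) = x := by
  ext j
  have hn : (n : ℂ) ≠ 0 := by exact_mod_cast j.pos.ne'
  rw [cellAverage_apply, inner_partIndicator_inducedSignal, ← mul_assoc, mul_inv_cancel₀ hn,
    one_mul]

lemma inner_inducedSignal (x : Fin n → ℂ) (f : L2) :
    ⟪inducedSignal x, f⟫_ℂ = (n : ℂ)⁻¹ * (star x ⬝ᵥ cellAverage n f) := by
  rw [inducedSignal_eq_sum, sum_inner, dotProduct, Finset.mul_sum]
  refine Finset.sum_congr rfl fun j _ => ?_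
  have hn : (n : ℂ) ≠ 0 := by exact_mod_cast j.pos.ne'
  rw [inner_smul_left, cellAverage_apply]
  field_simp
  exact mul_comm _ _

variable (n) in
def matrixOp (M : Matrix (Fin n) (Fin n) ℝ) : L2 →L[ℂ] L2 :=
  inducedSignalCLM n ∘L (M.map Complex.ofReal).mulVecLin.toContinuousLinearMap ∘L cellAverage n

lemma matrixOp_apply (M : Matrix (Fin n) (Fin n) ℝ) (f : L2) :
    matrixOp n M f = inducedSignalCLM n (M.map Complex.ofReal *ᵥ cellAverage n f) := rfl

lemma matrixOp_inducedSignal (M : Matrix (Fin n) (Fin n) ℝ) (x : Fin n → ℂ) :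
    matrixOp n M (inducedSignal x) = inducedSignal (M.map Complex.ofReal *ᵥ x) := by
  rw [matrixOp_apply, cellAverage_inducedSignal, inducedSignalCLM_apply]

lemma adjoint_matrixOp (M : Matrix (Fin n) (Fin n) ℝ) :
    ContinuousLinearMap.adjoint (matrixOp n M) = matrixOp n Mᵀ := by
  refine ((ContinuousLinearMap.eq_adjoint_iff _ _).2 fun f g => ?_).symm
  have hM : (Mᵀ.map Complex.ofReal)ᴴ = M.map Complex.ofReal := by ext; simp
  rw [← inner_conj_symm f, matrixOp_apply, matrixOp_apply, inducedSignalCLM_apply,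
    inducedSignalCLM_apply, inner_inducedSignal, inner_inducedSignal, map_mul, map_inv₀,
    Complex.conj_natCast, Matrix.star_dotProduct (M.map _ *ᵥ _), starRingEnd_apply, star_star,
    Matrix.star_mulVec, ← Matrix.dotProduct_mulVec, hM]

variable (n) in
def matrixOpHom : Matrix (Fin n) (Fin n) ℝ →⋆ₙₐ[ℝ] (L2 →L[ℂ] L2) where
  toFun := matrixOp n
  map_smul' c M := by
    ext f : 1
    have hsmul : (c • M).map Complex.ofReal = c • M.map Complex.ofReal :=
      Matrix.map_smul _ c (fun a => by simp) M
    simp only [matrixOp_apply, hsmul, Matrix.smul_mulVec, ContinuousLinearMap.map_smul_of_tower,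
      MonoidHom.id_apply, smul_apply]
  map_zero' := by
    ext f : 1
    simp [matrixOp_apply]
  map_add' M N := by
    ext f : 1
    simp [matrixOp_apply, Matrix.map_add, Matrix.add_mulVec]
  map_mul' M N := by
    ext f : 1
    have hmul : (M * N).map Complex.ofReal = M.map Complex.ofReal * N.map Complex.ofReal :=
      Matrix.map_mul (f := Complex.ofRealHom)
    simp [matrixOp_apply, hmul, Matrix.mulVec_mulVec, inducedSignalCLM_apply,
      cellAverage_inducedSignal]
  map_star' M := by
    rw [ContinuousLinearMap.star_eq_adjoint, adjoint_matrixOp, Matrix.star_eq_conjTranspose,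
      Matrix.conjTranspose_eq_transpose_of_trivial]

lemma continuous_matrixOpHom : Continuous (matrixOpHom n) :=
  LinearMap.continuous_of_finiteDimensional (LinearMapClass.linearMap (matrixOpHom n))

lemma IsSelfAdjoint.matrixOp {M : Matrix (Fin n) (Fin n) ℝ} (hM : IsSelfAdjoint M) :
    IsSelfAdjoint (matrixOp n M) :=
  hM.map (matrixOpHom n)

end Operators

lemma coeFn_inducedSignal {n : ℕ} (y : Fin n → ℂ) :
    ⇑(inducedSignal y) =ᵐ[μ01] fun v => ∑ i, ((part n i).indicator 1 v : ℝ) * y i := by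
  filter_upwards [Lp.coeFn_fun_finsetSum Finset.univ
      (fun j => indicatorConstLp 2 (part_meas n j) (part_ne_top n j) (y j)),
    ae_all_iff.2 fun j => indicatorConstLp_coeFn (p := 2) (hs := part_meas n j)
      (hμs := part_ne_top n j) (c := y j)] with v hsum hj
  rw [inducedSignal, hsum]
  refine Finset.sum_congr rfl fun j _ => ?_
  rw [hj j]
  by_cases hv : v ∈ part n j <;> simp [hv]

lemma integral_inducedGraphon_mul {n : ℕ} (B : Matrix (Fin n) (Fin n) ℝ) (f : L2) (v : ℝ) :
    ∫ u, (inducedGraphon B v u : ℂ) * f u ∂μ01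
      = ∑ i, ((part n i).indicator 1 v : ℝ) * ∑ j, (B i j : ℂ) * ∫ u in part n j, f u ∂μ01 := by
  have hf : Integrable f μ01 := (Lp.memLp f).integrable one_le_two
  have hexpand : ∀ u, (inducedGraphon B v u : ℂ) * f u
      = ∑ i, ∑ j, ((B i j : ℂ) * ((part n i).indicator 1 v : ℝ)) * (part n j).indicator f u := by
    intro u
    simp only [inducedGraphon, Complex.ofReal_sum, Complex.ofReal_mul, Finset.sum_mul]
    refine Finset.sum_congr rfl fun i _ => Finset.sum_congr rfl fun j _ => ?_
    by_cases hu : u ∈ part n j <;> simp [hu, mul_assoc]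
  simp_rw [hexpand]
  rw [integral_finsetSum _ fun i _ => integrable_finsetSum _ fun j _ =>
    (hf.indicator (part_meas n j)).const_mul _]
  refine Finset.sum_congr rfl fun i _ => ?_
  rw [integral_finsetSum _ fun j _ => (hf.indicator (part_meas n j)).const_mul _, Finset.mul_sum]
  refine Finset.sum_congr rfl fun j _ => ?_
  rw [integral_const_mul, integral_indicator (part_meas n j)]
  ring

lemma IsGRSO.eq_matrixOp {n : ℕ} {Δ : Matrix (Fin n) (Fin n) ℝ} {T : L2 →L[ℂ] L2}
    (hT : IsGRSO (inducedGraphon ((n : ℝ) • Δ)) T) : T = matrixOp n Δ := by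
  ext f : 1
  refine Lp.ext ?_
  filter_upwards [hT f, coeFn_inducedSignal (Δ.map Complex.ofReal *ᵥ cellAverage n f)]
    with v hTf hψ
  rw [hTf, matrixOp_apply, inducedSignalCLM_apply, hψ, integral_inducedGraphon_mul]
  refine Finset.sum_congr rfl fun i _ => congrArg _ (Finset.sum_congr rfl fun j _ => ?_)
  simp only [Matrix.smul_apply, smul_eq_mul, Complex.ofReal_mul, Complex.ofReal_natCast,
    Matrix.map_apply, cellAverage_apply, inner_partIndicator]
  ring

section FunctionalCalculus

variable {R A : Type*} {p : A → Prop} [Field R] [StarRing R] [MetricSpace R]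
  [IsTopologicalRing R] [ContinuousStar R] [Ring A] [StarRing A] [TopologicalSpace A]
  [Algebra R A] [ContinuousFunctionalCalculus R A p] [ContinuousMapZero.UniqueHom R A]

lemma cfc_eq_cfcₙ_add_algebraMap (f : R → R) (a : A)
    (hf : ContinuousOn f (quasispectrum R a) := by cfc_cont_tac) (ha : p a := by cfc_tac) :
    cfc f a = cfcₙ (fun t => f t - f 0) a + algebraMap R A (f 0) := by
  have hg : ContinuousOn (fun t => f t - f 0) (quasispectrum R a) := hf.sub continuousOn_const
  rw [cfcₙ_eq_cfc hg (sub_self _),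
    ← cfc_add_const _ _ a (hg.mono (spectrum_subset_quasispectrum R a))]
  simp

end FunctionalCalculus

lemma inducedSignal_cfc_mulVec {n : ℕ} {Δ : Matrix (Fin n) (Fin n) ℝ} (hΔ : IsSelfAdjoint Δ)
    {h : ℝ → ℝ} (hh : Continuous h) (x : Fin n → ℂ) :
    inducedSignal ((cfc h Δ).map Complex.ofReal *ᵥ x)
      = cfc h (matrixOp n Δ) (inducedSignal x) := by
  have hT : IsSelfAdjoint (matrixOp n Δ) := hΔ.matrixOp
  calc inducedSignal ((cfc h Δ).map Complex.ofReal *ᵥ x)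
      = matrixOpHom n (cfc h Δ) (inducedSignal x) := (matrixOp_inducedSignal _ _).symm
    _ = matrixOpHom n (cfcₙ (fun t => h t - h 0) Δ) (inducedSignal x)
          + h 0 • matrixOp n 1 (inducedSignal x) := by
        rw [cfc_eq_cfcₙ_add_algebraMap h Δ, map_add, Algebra.algebraMap_eq_smul_one, map_smul]
        rfl
    _ = cfcₙ (fun t => h t - h 0) (matrixOp n Δ) (inducedSignal x) + h 0 • inducedSignal x := by
        rw [NonUnitalStarAlgHom.map_cfcₙ (matrixOpHom n) _ Δ (hφ := continuous_matrixOpHom),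
          matrixOp_inducedSignal, Matrix.map_one _ Complex.ofReal_zero Complex.ofReal_one,
          Matrix.one_mulVec]
        rfl
    _ = cfc h (matrixOp n Δ) (inducedSignal x) := by
        rw [cfc_eq_cfcₙ_add_algebraMap h (matrixOp n Δ), Algebra.algebraMap_eq_smul_one]
        rfl

lemma Filter.Tendsto.cfc_of_isSelfAdjoint {X A : Type*} [CStarAlgebra A] {l : Filter X}
    [l.NeBot] {a : X → A} {a₀ : A} (f : ℝ → ℝ) (hf : Continuous f) (ha : Tendsto a l (𝓝 a₀))
    (hsa : ∀ᶠ x in l, IsSelfAdjoint (a x)) :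
    Tendsto (fun x => cfc f (a x)) l (𝓝 (cfc f a₀)) := by
  have hclosed : IsClosed {b : A | IsSelfAdjoint b} := isClosed_eq continuous_star continuous_id
  have hcont : ContinuousOn (cfc f) {b : A | IsSelfAdjoint b} :=
    continuousOn_id.cfc_of_mem_nhdsSet f (s := Set.univ) Filter.univ_mem
      (fun _ hb => hb) hf.continuousOn
  exact (hcont _ (hclosed.mem_of_tendsto ha hsa)).tendsto.comp
    (tendsto_nhdsWithin_iff.2 ⟨ha, hsa⟩)

theorem statement9_general (Δ : (n : ℕ) → Matrix (Fin n) (Fin n) ℝ) (hΔ : ∀ n, (Δ n).IsSymm)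
    (TA : (n : ℕ) → L2 →L[ℂ] L2)
    (hTA : ∀ n : ℕ, IsGRSO (inducedGraphon ((n : ℝ) • Δ n)) (TA n))
    (TW : L2 →L[ℂ] L2)
    (hconv : Tendsto (fun n => ‖TA n - TW‖) atTop (nhds 0))
    (h : ℝ → ℝ) (hh : Continuous h)
    (x : (n : ℕ) → Fin n → ℂ) (ψ : L2)
    (hx : Tendsto (fun n => ‖inducedSignal (x n) - ψ‖) atTop (nhds 0)) :
    ∀ ε > 0, ∃ N, ∀ n ≥ N, ∀ m ≥ N,
      ‖inducedSignal (((cfc h (Δ n)).map Complex.ofReal).mulVec (x n)) -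
        inducedSignal (((cfc h (Δ m)).map Complex.ofReal).mulVec (x m))‖ < ε := by
  have hTA' : ∀ n, TA n = matrixOp n (Δ n) := fun n => (hTA n).eq_matrixOp
  have hsa : ∀ n, IsSelfAdjoint (Δ n) := fun n => Matrix.isHermitian_iff_isSymm.2 (hΔ n)
  have hout : ∀ n, inducedSignal (((cfc h (Δ n)).map Complex.ofReal).mulVec (x n))
      = cfc h (TA n) (inducedSignal (x n)) := fun n => by
    rw [hTA' n, inducedSignal_cfc_mulVec (hsa n) hh]
  have hcfc : Tendsto (fun n => cfc h (TA n)) atTop (𝓝 (cfc h TW)) :=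
    (tendsto_iff_norm_sub_tendsto_zero.2 hconv).cfc_of_isSelfAdjoint h hh
      (Eventually.of_forall fun n => hTA' n ▸ (hsa n).matrixOp)
  have hlim : Tendsto (fun n => cfc h (TA n) (inducedSignal (x n))) atTop
      (𝓝 (cfc h TW ψ)) :=
    (isBoundedBilinearMap_apply.continuous.tendsto _).comp
      (hcfc.prodMk_nhds (tendsto_iff_norm_sub_tendsto_zero.2 hx))
  intro ε hε
  obtain ⟨N, hN⟩ := Metric.cauchySeq_iff.1 hlim.cauchySeq ε hε
  exact ⟨N, fun n hn m hm => by simpa only [hout, dist_eq_norm] using hN n hn m hm⟩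

/-- If the graphon shift operators induced by the GWMs `A n = n·Δ n` converge
in operator norm to `T_W`, `h : ℝ → ℝ` is continuous, and signals `x n` satisfy
`‖ψ_{x n} − ψ‖ → 0`, then the induced filter outputs `ψ_{h(Δ n) x n}` form a Cauchy
sequence in `L²[0,1]`. -/
theorem statement9 (Δ : (n : ℕ) → Matrix (Fin n) (Fin n) ℝ) (hΔ : ∀ n, (Δ n).IsSymm)
    (W : ℝ → ℝ → ℝ) (hW : IsGraphon W)
    (TA : (n : ℕ) → L2 →L[ℂ] L2)
    (hTA : ∀ n : ℕ, IsGRSO (inducedGraphon ((n : ℝ) • Δ n)) (TA n))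
    (TW : L2 →L[ℂ] L2) (hTW : IsGRSO W TW)
    (hconv : Tendsto (fun n => ‖TA n - TW‖) atTop (nhds 0))
    (h : ℝ → ℝ) (hh : Continuous h)
    (x : (n : ℕ) → Fin n → ℂ) (ψ : L2)
    (hx : Tendsto (fun n => ‖inducedSignal (x n) - ψ‖) atTop (nhds 0)) :
    ∀ ε > 0, ∃ N, ∀ n ≥ N, ∀ m ≥ N,
      ‖inducedSignal (((cfc h (Δ n)).map Complex.ofReal).mulVec (x n)) -
        inducedSignal (((cfc h (Δ m)).map Complex.ofReal).mulVec (x m))‖ < ε :=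
  statement9_general Δ hΔ TA hTA TW hconv h hh x ψ hx
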